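/- For any element x of a unital associative ℂ-algebra, scalars a, d ∈ ℂ, and m ∈ ℕ, one has Σ_{r+s=m} ((-1)^s / (r! s!)) · x_a^{[r]} · x_{d-r}^{[s]} = binom(a-d+m-1, m) · 1, where binom(z, m) = z(z-1)⋯(z-m+1)/m! is the generalized binomial coefficient. -/

import Mathlib

/-!
Writing `fall x a r = D_r (x + a)` with `D_r` the descending Pochhammer polynomial, the
reflection `(-1)^s D_s(y) = D_s(s - 1 - y)` turns the second factor into `D_s(m - 1 - d - x)`,
which no longer depends on `r`. The Chu–Vandermonde identity for the commuting elements `x + a`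
and `m - 1 - d - x` then collapses the sum to `D_m(a - d + m - 1) / m!`.
-/

noncomputable def rise {A : Type*} [Ring A] [Algebra ℂ A] (x : A) (a : ℂ) : ℕ → A
  | 0 => 1
  | r + 1 => rise x a r * (x + algebraMap ℂ A (a + r))

noncomputable def fall {A : Type*} [Ring A] [Algebra ℂ A] (x : A) (a : ℂ) : ℕ → A
  | 0 => 1
  | r + 1 => fall x a r * (x + algebraMap ℂ A (a - r))

/-- The generalized binomial coefficient $\binom{z}{m} = z(z-1)\cdots(z-m+1)/m!$. -/
noncomputable def gbinom (z : ℂ) (m : ℕ) : ℂ :=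
  (∏ i ∈ Finset.range m, (z - i)) / (m.factorial : ℂ)

open Polynomial Finset

theorem neg_one_pow_mul_descPochhammer_smeval {R : Type*} [Ring R] (v : R) (n : ℕ) :
    (-1) ^ n * (descPochhammer ℤ n).smeval v = (descPochhammer ℤ n).smeval (n - 1 - v) := by
  rw [descPochhammer_smeval_eq_ascPochhammer ((n : R) - 1 - v),
    show (n : R) - 1 - v - n + 1 = -v by abel, ascPochhammer_smeval_neg_eq_descPochhammer,
    Int.negOnePow_def, Units.smul_def, zsmul_eq_mul]
  simp

theorem sum_antidiagonal_smul_descPochhammer_smeval_mul {K A : Type*} [Field K] [CharZero K]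
    [Ring A] [Algebra K A] {u w : A} (h : Commute u w) (m : ℕ) :
    ∑ p ∈ antidiagonal m, ((p.1.factorial * p.2.factorial : K)⁻¹ •
      ((descPochhammer ℤ p.1).smeval u * (descPochhammer ℤ p.2).smeval w)) =
      (m.factorial : K)⁻¹ • (descPochhammer ℤ m).smeval (u + w) := by
  rw [Ring.descPochhammer_smeval_add m h, smul_sum]
  refine sum_congr rfl fun p hp => ?_
  obtain rfl := mem_antidiagonal.mp hp
  rw [← nsmul_eq_mul (α := A), ← Nat.cast_smul_eq_nsmul K, smul_smul]
  congr 1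
  rw [Nat.cast_add_choose K, ← mul_div_assoc,
    inv_mul_cancel₀ (Nat.cast_ne_zero.mpr (Nat.factorial_ne_zero _)), one_div]

section

variable {A : Type*} [Ring A] [Algebra ℂ A]

theorem fall_eq_smeval_descPochhammer (x : A) (a : ℂ) (r : ℕ) :
    fall x a r = (descPochhammer ℤ r).smeval (x + algebraMap ℂ A a) := by
  induction r with
  | zero => simp [fall]
  | succ r ih =>
    rw [fall, ih, descPochhammer_succ_right, smeval_mul, smeval_sub, smeval_X, smeval_natCast]
    simp [add_sub_assoc]

theorem fall_zero_left (c : ℂ) (m : ℕ) :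
    fall (0 : A) c m = algebraMap ℂ A (∏ i ∈ range m, (c - i)) := by
  induction m with
  | zero => simp [fall]
  | succ m ih => rw [fall, ih, prod_range_succ, zero_add, map_mul]

theorem neg_one_pow_smul_fall_mul_fall (x : A) (a d : ℂ) {r s m : ℕ} (h : r + s = m) :
    (-1 : ℂ) ^ s • (fall x a r * fall x (d - r) s) =
      (descPochhammer ℤ r).smeval (x + algebraMap ℂ A a) *
        (descPochhammer ℤ s).smeval (algebraMap ℂ A (m - 1 - d) - x) := by
  have hw : (s : A) - 1 - (x + algebraMap ℂ A (d - r)) = algebraMap ℂ A (m - 1 - d) - x := by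
    simp only [← h, map_sub, map_add, map_natCast, map_one, Nat.cast_add]
    abel
  rw [fall_eq_smeval_descPochhammer, fall_eq_smeval_descPochhammer, ← mul_smul_comm,
    Algebra.smul_def, map_pow, map_neg, map_one, neg_one_pow_mul_descPochhammer_smeval, hw]

end

theorem fall_fall_sum {A : Type*} [Ring A] [Algebra ℂ A] (x : A) (a d : ℂ) (m : ℕ) :
    ∑ p ∈ Finset.HasAntidiagonal.antidiagonal m,
      (((-1 : ℂ) ^ p.2 / ((p.1.factorial : ℂ) * (p.2.factorial : ℂ))) •
        (fall x a p.1 * fall x (d - p.1) p.2)) = gbinom (a - d + m - 1) m • (1 : A) := by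
  set u := x + algebraMap ℂ A a
  set w := algebraMap ℂ A (m - 1 - d) - x
  have hterm : ∀ p ∈ antidiagonal m,
      ((-1 : ℂ) ^ p.2 / (p.1.factorial * p.2.factorial)) •
          (fall x a p.1 * fall x (d - p.1) p.2) =
        (p.1.factorial * p.2.factorial : ℂ)⁻¹ •
          ((descPochhammer ℤ p.1).smeval u * (descPochhammer ℤ p.2).smeval w) := fun p hp => by
    rw [div_eq_inv_mul, mul_smul, neg_one_pow_smul_fall_mul_fall x a d (mem_antidiagonal.mp hp)]
  have hcomm : Commute u w :=
    ((Algebra.commute_algebraMap_left _ x).symm.sub_right (Commute.refl x)).add_left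
      ((Algebra.commute_algebraMap_left a _).sub_right (Algebra.commute_algebraMap_left a x))
  have hsum : u + w = 0 + algebraMap ℂ A (a - d + m - 1) := by
    simp only [u, w, map_sub, map_add, map_natCast, map_one]
    abel
  rw [sum_congr rfl hterm, sum_antidiagonal_smul_descPochhammer_smeval_mul hcomm, hsum,
    ← fall_eq_smeval_descPochhammer, fall_zero_left, gbinom, Algebra.algebraMap_eq_smul_one,
    smul_smul, div_eq_inv_mul]
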